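/- Let n ≥ 3 and 2 ≤ p ≤ n. Let Ric be a real symmetric n×n matrix with R := trace(Ric), let E := Ric − (R/n)·Id be its traceless part, let Riem be the associated locally conformally flat curvature tensor, and let α be a totally antisymmetric map on p-tuples of indices from {1,…,n}. Then the Weitzenböck curvature term satisfies the identity F(α) = ((n−2p)/(n−2))·∑_{i,j,i₂,…,i_p=1}^{n} E_{ij} α(i,i₂,…,i_p) α(j,i₂,…,i_p) + ((n−p)·R/(n(n−1)))·|α|². -/
import Mathlib


/-- The curvature tensor of a locally conformally flat manifold, expressed
pointwise in terms of its Ricci tensor `Ric` and scalar curvature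
`R = trace Ric` (formula (2.2) of the paper). -/
noncomputable def lcfRiem (n : ℕ) (Ric : Matrix (Fin n) (Fin n) ℝ)
    (i j k l : Fin n) : ℝ :=
  (1 / ((n : ℝ) - 2)) *
      (Ric i k * (if j = l then (1 : ℝ) else 0) -
        Ric i l * (if j = k then (1 : ℝ) else 0) +
        Ric j l * (if i = k then (1 : ℝ) else 0) -
        Ric j k * (if i = l then (1 : ℝ) else 0)) -
    ((∑ m, Ric m m) / (((n : ℝ) - 1) * ((n : ℝ) - 2))) *
      ((if i = k then (1 : ℝ) else 0) * (if j = l then (1 : ℝ) else 0) -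
        (if i = l then (1 : ℝ) else 0) * (if j = k then (1 : ℝ) else 0))

section StmtSevenAux

variable {n p : ℕ}

/-- Composing a doubly-updated map with the swap of the two updated slots
exchanges the two updated values. -/
lemma stmt7_swap_update (I : Fin p → Fin n) (e0 e1 : Fin p) (h : e0 ≠ e1) (x y : Fin n) :
    (Function.update (Function.update I e0 x) e1 y) ∘ (Equiv.swap e0 e1)
      = Function.update (Function.update I e0 y) e1 x := by
  funext m
  simp only [Function.comp_apply]
  rcases eq_or_ne m e0 with rfl | h0
  · rw [Equiv.swap_apply_left, Function.update_self, Function.update_of_ne h, Function.update_self]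
  rcases eq_or_ne m e1 with rfl | h1
  · rw [Equiv.swap_apply_right, Function.update_of_ne h, Function.update_self, Function.update_self]
  · rw [Equiv.swap_apply_of_ne_of_ne h0 h1, Function.update_of_ne h1, Function.update_of_ne h0,
      Function.update_of_ne h1, Function.update_of_ne h0]

lemma stmt7_comp_swap_update (I : Fin p → Fin n) (e0 e1 : Fin p) (h : e0 ≠ e1) (k : Fin n) :
    (Function.update I e1 k) ∘ (Equiv.swap e0 e1)
      = Function.update (I ∘ (Equiv.swap e0 e1)) e0 k := by
  funext m
  simp only [Function.comp_apply]
  rcases eq_or_ne m e0 with rfl | h0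
  · rw [Equiv.swap_apply_left, Function.update_self, Function.update_self]
  rcases eq_or_ne m e1 with rfl | h1
  · rw [Equiv.swap_apply_right, Function.update_of_ne h, Function.update_of_ne h.symm,
      Function.comp_apply, Equiv.swap_apply_right]
  · rw [Equiv.swap_apply_of_ne_of_ne h0 h1, Function.update_of_ne h1, Function.update_of_ne h0,
      Function.comp_apply, Equiv.swap_apply_of_ne_of_ne h0 h1]

lemma stmt7_upd_upd_self (I : Fin p → Fin n) (e0 e1 : Fin p) (h : e1 ≠ e0) (k : Fin n) :
    Function.update (Function.update I e0 k) e1 (I e1) = Function.update I e0 k := by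
  conv_lhs => rw [show I e1 = (Function.update I e0 k) e1 from (Function.update_of_ne h k I).symm]
  exact Function.update_eq_self _ _

/-- The per-`I` inner double sum of the curvature term, collapsed using the
Kronecker deltas in `lcfRiem` and the antisymmetry of `α`. -/
lemma stmt7_inner (Ric : Matrix (Fin n) (Fin n) ℝ) (α : (Fin p → Fin n) → ℝ)
    (hanti : ∀ (I : Fin p → Fin n) (k l : Fin p), k ≠ l →
      α (I ∘ Equiv.swap k l) = -α I)
    (e0 e1 : Fin p) (h : e0 ≠ e1) (I : Fin p → Fin n) :
    ∑ k, ∑ l, lcfRiem n Ric (I e0) (I e1) k l * α I *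
        α (Function.update (Function.update I e0 k) e1 l)
    = (2/((n:ℝ)-2)) * (∑ k, Ric (I e0) k * α I * α (Function.update I e0 k))
      + (2/((n:ℝ)-2)) * (∑ k, Ric (I e1) k * α I * α (Function.update I e1 k))
      - (2*(∑ m, Ric m m)/(((n:ℝ)-1)*((n:ℝ)-2))) * (α I)^2 := by
  have hb1 : ∀ k, Function.update (Function.update I e0 k) e1 (I e1)
      = Function.update I e0 k := fun k => stmt7_upd_upd_self I e0 e1 h.symm k
  have hb2 : ∀ l, α (Function.update (Function.update I e0 (I e1)) e1 l)
      = -α (Function.update I e0 l) := by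
    intro l
    have := hanti (Function.update (Function.update I e0 l) e1 (I e1)) e0 e1 h
    rw [stmt7_swap_update I e0 e1 h l (I e1), stmt7_upd_upd_self I e0 e1 h.symm l] at this
    exact this
  have hb3 : ∀ k, α (Function.update (Function.update I e0 k) e1 (I e0))
      = -α (Function.update I e1 k) := by
    intro k
    have := hanti (Function.update (Function.update I e0 (I e0)) e1 k) e0 e1 h
    rw [stmt7_swap_update I e0 e1 h (I e0) k, Function.update_eq_self] at this
    exact this
  simp only [lcfRiem, sub_mul, add_mul, mul_sub, mul_add, ite_mul, mul_ite, mul_zero, zero_mul,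
    mul_one, one_mul, Finset.sum_sub_distrib, Finset.sum_add_distrib, Finset.sum_ite_irrel,
    Finset.sum_const_zero, Finset.sum_ite_eq, Finset.sum_ite_eq', Finset.mem_univ, if_true]
  simp only [hb1, hb2, hb3, Function.update_eq_self, mul_neg, sub_neg_eq_add,
    Finset.sum_neg_distrib]
  rw [Finset.mul_sum, Finset.mul_sum]
  congr 1
  · simp only [← Finset.sum_add_distrib]
    exact Finset.sum_congr rfl fun x _ => by ring
  · ring

/-- Reindexing by the swap of the first two slots identifies the slot-`e1`
Ricci contraction with the slot-`e0` one. -/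
lemma stmt7_swap_sum (Ric : Matrix (Fin n) (Fin n) ℝ) (α : (Fin p → Fin n) → ℝ)
    (hanti : ∀ (I : Fin p → Fin n) (k l : Fin p), k ≠ l →
      α (I ∘ Equiv.swap k l) = -α I)
    (e0 e1 : Fin p) (h : e0 ≠ e1) :
    ∑ I : Fin p → Fin n, ∑ k, Ric (I e1) k * α I * α (Function.update I e1 k)
    = ∑ I : Fin p → Fin n, ∑ k, Ric (I e0) k * α I * α (Function.update I e0 k) := by
  refine Fintype.sum_equiv ((Equiv.swap e0 e1).arrowCongr (Equiv.refl (Fin n))) _ _ ?_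
  intro I
  have hIc : ((Equiv.swap e0 e1).arrowCongr (Equiv.refl (Fin n))) I
      = I ∘ (Equiv.swap e0 e1) := by
    funext m
    simp [Equiv.arrowCongr_apply, Equiv.symm_swap]
  rw [hIc]
  refine Finset.sum_congr rfl fun k _ => ?_
  have h1 : (I ∘ (Equiv.swap e0 e1)) e0 = I e1 := by
    simp [Equiv.swap_apply_left]
  have h2 : α (I ∘ (Equiv.swap e0 e1)) = -α I := hanti I e0 e1 h
  have h3 : α (Function.update (I ∘ (Equiv.swap e0 e1)) e0 k)
      = -α (Function.update I e1 k) := by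
    rw [← stmt7_comp_swap_update I e0 e1 h k]
    exact hanti (Function.update I e1 k) e0 e1 h
  rw [h1, h2, h3]
  ring

end StmtSevenAux

/-- The traceless-Ricci form (4.5) of the Weitzenböck curvature term: with
`E = Ric - (R/n) Id`,
`F(α) = ((n-2p)/(n-2)) ∑ E_ij α(i,…) α(j,…) + ((n-p) R/(n(n-1))) |α|²`. -/
theorem stmt_7 (n p : ℕ) (hn : 3 ≤ n) (hp : 2 ≤ p) (hpn : p ≤ n)
    (Ric : Matrix (Fin n) (Fin n) ℝ) (hsymm : ∀ i j, Ric i j = Ric j i)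
    (α : (Fin p → Fin n) → ℝ)
    (hanti : ∀ (I : Fin p → Fin n) (k l : Fin p), k ≠ l →
      α (I ∘ Equiv.swap k l) = -α I) :
    (∑ I : Fin p → Fin n, ∑ j : Fin n,
        Ric (I ⟨0, by omega⟩) j * α I * α (Function.update I ⟨0, by omega⟩ j)) -
      (((p : ℝ) - 1) / 2) *
        ∑ I : Fin p → Fin n, ∑ k : Fin n, ∑ l : Fin n,
          lcfRiem n Ric (I ⟨0, by omega⟩) (I ⟨1, by omega⟩) k l * α I *
            α (Function.update (Function.update I ⟨0, by omega⟩ k) ⟨1, by omega⟩ l) =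
    (((n : ℝ) - 2 * (p : ℝ)) / ((n : ℝ) - 2)) *
        (∑ I : Fin p → Fin n, ∑ j : Fin n,
          (Ric (I ⟨0, by omega⟩) j -
              ((∑ m, Ric m m) / (n : ℝ)) *
                (if (I ⟨0, by omega⟩ : Fin n) = j then (1 : ℝ) else 0)) *
            α I * α (Function.update I ⟨0, by omega⟩ j)) +
      (((n : ℝ) - (p : ℝ)) * (∑ m, Ric m m) / ((n : ℝ) * ((n : ℝ) - 1))) *
        ∑ I : Fin p → Fin n, (α I) ^ 2 := by
  have h01 : (⟨0, by omega⟩ : Fin p) ≠ ⟨1, by omega⟩ := by simp [Fin.ext_iff]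
  -- abbreviations
  set Rm : ℝ := ∑ m, Ric m m with hRm
  -- the curvature triple sum in terms of S and N
  have hT : (∑ I : Fin p → Fin n, ∑ k : Fin n, ∑ l : Fin n,
        lcfRiem n Ric (I ⟨0, by omega⟩) (I ⟨1, by omega⟩) k l * α I *
          α (Function.update (Function.update I ⟨0, by omega⟩ k) ⟨1, by omega⟩ l))
      = (4/((n:ℝ)-2)) * (∑ I : Fin p → Fin n, ∑ j : Fin n,
            Ric (I ⟨0, by omega⟩) j * α I * α (Function.update I ⟨0, by omega⟩ j))
        - (2*Rm/(((n:ℝ)-1)*((n:ℝ)-2))) * ∑ I : Fin p → Fin n, (α I) ^ 2 := by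
    rw [Finset.sum_congr rfl fun I _ =>
      stmt7_inner Ric α hanti (⟨0, by omega⟩ : Fin p) (⟨1, by omega⟩ : Fin p) h01 I]
    rw [Finset.sum_sub_distrib, Finset.sum_add_distrib, ← Finset.mul_sum, ← Finset.mul_sum,
      ← Finset.mul_sum,
      stmt7_swap_sum Ric α hanti (⟨0, by omega⟩ : Fin p) (⟨1, by omega⟩ : Fin p) h01, ← hRm]
    ring
  -- the traceless double sum in terms of S and N
  have hD : (∑ I : Fin p → Fin n, ∑ j : Fin n,
        (Ric (I ⟨0, by omega⟩) j -
            (Rm / (n : ℝ)) * (if (I ⟨0, by omega⟩ : Fin n) = j then (1 : ℝ) else 0)) *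
          α I * α (Function.update I ⟨0, by omega⟩ j))
      = (∑ I : Fin p → Fin n, ∑ j : Fin n,
          Ric (I ⟨0, by omega⟩) j * α I * α (Function.update I ⟨0, by omega⟩ j))
        - (Rm / (n : ℝ)) * ∑ I : Fin p → Fin n, (α I) ^ 2 := by
    rw [Finset.mul_sum, ← Finset.sum_sub_distrib]
    refine Finset.sum_congr rfl fun I _ => ?_
    simp only [sub_mul, ite_mul, mul_ite, zero_mul, mul_zero, one_mul, mul_one,
      Finset.sum_sub_distrib, Finset.sum_ite_eq, Finset.mem_univ, if_true,
      Function.update_eq_self]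
    ring
  rw [hT, hD]
  have hn0 : (n : ℝ) ≠ 0 := by positivity
  have hn1 : (n : ℝ) - 1 ≠ 0 := by
    have : (3 : ℝ) ≤ (n : ℝ) := by exact_mod_cast hn
    linarith
  have hn2 : (n : ℝ) - 2 ≠ 0 := by
    have : (3 : ℝ) ≤ (n : ℝ) := by exact_mod_cast hn
    linarith
  field_simp
  ring
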